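/- Let A₀⁺ ∈ gl(3,ℂ) be the symmetric traceless matrix with rows (0, 1, i), (1, 0, 0), (i, 0, 0), and A₀⁻ the matrix with rows (0, 1, −i), (1, 0, 0), (−i, 0, 0). Then for each sign ±: (a) e^{∓iφ} A₀^± = ρ(φ) A₀^± ρ(−φ) for all φ ∈ ℝ, where ρ(φ) := exp(φ ê₁); (b) the stabilizer of A₀^± under the conjugation action of SO(3) is trivial, i.e. R A₀^± R⁻¹ = A₀^± with R ∈ SO(3) implies R = I₃; and (c) the stabilizer of A₀^± under the action (e^{iφ}, R) · A = e^{iφ} R A R⁻¹ of U(1) × SO(3) equals {(e^{iφ}, exp(±φ ê₁)) : φ ∈ ℝ}, a group isomorphic to U(1). -/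

import Mathlib

/-!
Conjugation by `ρ(φ) = exp(φ ê₁)` is diagonal in the eigenbasis `e₁, (0, 1, ∓i)` of `ê₁`
(eigenvalues `0, ±i`), so `ρ(φ)` is the rotation by `φ` about `e₁`, and (a) is a direct
computation: `A₀^±` is built from `e₁` and the eigenvector `(0, 1, ±i)`, on which `ρ(φ)` acts by
the phase `e^{∓iφ}`. For (b), a real matrix commuting with `A₀^±` is forced entrywise to be a
scalar, and `det R = 1` makes the scalar `1`. For (c), if `(e^{iφ}, R)` fixes `A₀^±` then by (a)
`ρ(∓φ) R` is fixed by plain conjugation, so `R = ρ(±φ)` by (b): the stabilizer is the graph of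
`e^{iφ} ↦ ρ(±φ)` over `U(1)`, and the phase is the isomorphism.
-/

open Matrix

noncomputable section

abbrev M3R : Type := Matrix (Fin 3) (Fin 3) ℝ
abbrev M3C : Type := Matrix (Fin 3) (Fin 3) ℂ

def isSO3 (R : M3R) : Prop := R * Rᵀ = 1 ∧ R.det = 1

def toC (R : M3R) : M3C := R.map (fun x => (x : ℂ))

/-- `ê₁`, the skew-symmetric matrix with `ê₁ x = e₁ × x`. -/
def e1hat : M3R := !![0, 0, 0; 0, 0, -1; 0, 1, 0]

/-- `ρ(θ) = exp(θ ê₁)`, the matrix exponential of `θ ê₁`. -/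
def rho1 (θ : ℝ) : M3R := NormedSpace.exp (θ • e1hat)

/-- `A₀^± ∈ gl(3,ℂ)` with rows `(0, 1, ±i), (1, 0, 0), (±i, 0, 0)`, where `s = ±1`. -/
def A0s (s : ℝ) : M3C :=
  !![0, 1, (s : ℂ) * Complex.I; 1, 0, 0; (s : ℂ) * Complex.I, 0, 0]

/-- The stabilizer of `A₀^±` in `U(1) × SO(3)` for the action
`(e^{iφ}, R) · A = e^{iφ} R A R⁻¹`. -/
def StabS (s : ℝ) : Set (ℂ × M3R) :=
  {g | (‖g.1‖ = 1 ∧ isSO3 g.2) ∧ g.1 • (toC g.2 * A0s s * (toC g.2)⁻¹) = A0s s}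

open Complex

lemma toC_eq_mapMatrix : toC = (algebraMap ℝ ℂ).mapMatrix := rfl

lemma toC_one : toC 1 = 1 := by rw [toC_eq_mapMatrix, map_one]

lemma toC_mul (R S : M3R) : toC (R * S) = toC R * toC S := by
  rw [toC_eq_mapMatrix, map_mul]

lemma toC_injective : Function.Injective toC :=
  Matrix.map_injective Complex.ofReal_injective

lemma continuous_toC : Continuous toC :=
  continuous_id.matrix_map Complex.continuous_ofReal

lemma isSO3.mul {R S : M3R} (hR : isSO3 R) (hS : isSO3 S) : isSO3 (R * S) := by
  refine ⟨?_, by rw [det_mul, hR.2, hS.2, one_mul]⟩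
  rw [transpose_mul, mul_assoc, ← mul_assoc S, hS.1, one_mul, hR.1]

lemma isSO3.inv_toC {R : M3R} (hR : isSO3 R) : (toC R)⁻¹ = toC Rᵀ :=
  inv_eq_right_inv (by rw [← toC_mul, hR.1, toC_one])

lemma isSO3.inv_mul_toC {R : M3R} (hR : isSO3 R) : (toC R)⁻¹ * toC R = 1 := by
  rw [hR.inv_toC, ← toC_mul, mul_eq_one_comm.mp hR.1, toC_one]

lemma e1hat_transpose : e1hatᵀ = -e1hat := by
  ext i j; fin_cases i <;> fin_cases j <;> simp [e1hat]

lemma rho1_zero : rho1 0 = 1 := by simp [rho1]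

lemma rho1_add (a b : ℝ) : rho1 (a + b) = rho1 a * rho1 b := by
  rw [rho1, add_smul,
    Matrix.exp_add_of_commute _ _ (((Commute.refl e1hat).smul_left a).smul_right b)]
  rfl

lemma rho1_transpose (θ : ℝ) : (rho1 θ)ᵀ = rho1 (-θ) := by
  rw [rho1, ← Matrix.exp_transpose, transpose_smul, e1hat_transpose, smul_neg, ← neg_smul]
  rfl

/-- Columns are eigenvectors of `ê₁` for the eigenvalues `0, i, -i`. -/
def e1hatEigenbasis : M3C := !![1, 0, 0; 0, 1, 1; 0, -I, I]

def e1hatEigenbasisInv : M3C := !![1, 0, 0; 0, 1 / 2, I / 2; 0, 1 / 2, -I / 2]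

lemma e1hatEigenbasis_mul_inv : e1hatEigenbasis * e1hatEigenbasisInv = 1 := by
  ext i j
  fin_cases i <;> fin_cases j <;>
    simp [e1hatEigenbasis, e1hatEigenbasisInv, mul_apply, Fin.sum_univ_three] <;> ring_nf
  all_goals simp [I_sq]

lemma isUnit_e1hatEigenbasis : IsUnit e1hatEigenbasis :=
  ⟨⟨_, _, e1hatEigenbasis_mul_inv, mul_eq_one_comm.mp e1hatEigenbasis_mul_inv⟩, rfl⟩

lemma inv_e1hatEigenbasis : e1hatEigenbasis⁻¹ = e1hatEigenbasisInv :=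
  inv_eq_right_inv e1hatEigenbasis_mul_inv

lemma toC_smul_e1hat (θ : ℝ) :
    toC (θ • e1hat) = e1hatEigenbasis * diagonal ![0, θ * I, -θ * I] * e1hatEigenbasis⁻¹ := by
  rw [inv_e1hatEigenbasis]
  ext i j
  fin_cases i <;> fin_cases j <;>
    simp [e1hatEigenbasis, e1hatEigenbasisInv, toC, e1hat, mul_apply, Fin.sum_univ_three,
      vecMul_diagonal] <;>
    ring_nf <;> simp [I_sq]

lemma toC_rotation (θ : ℝ) :
    toC !![1, 0, 0; 0, Real.cos θ, -Real.sin θ; 0, Real.sin θ, Real.cos θ] =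
      e1hatEigenbasis * diagonal ![1, exp (θ * I), exp (-θ * I)] * e1hatEigenbasis⁻¹ := by
  rw [inv_e1hatEigenbasis, ← ofReal_neg, exp_mul_I, exp_mul_I]
  ext i j
  fin_cases i <;> fin_cases j <;>
    simp [e1hatEigenbasis, e1hatEigenbasisInv, toC, mul_apply, Fin.sum_univ_three,
      vecMul_diagonal] <;>
    ring_nf <;> simp [I_sq]

lemma toC_exp (A : M3R) : toC (NormedSpace.exp A) = NormedSpace.exp (toC A) := by
  open scoped Norms.Operator in
  exact NormedSpace.map_exp (algebraMap ℝ ℂ).mapMatrix continuous_toC A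

lemma rho1_eq (θ : ℝ) :
    rho1 θ = !![1, 0, 0; 0, Real.cos θ, -Real.sin θ; 0, Real.sin θ, Real.cos θ] := by
  apply toC_injective
  rw [rho1, toC_exp, toC_smul_e1hat, Matrix.exp_conj _ _ isUnit_e1hatEigenbasis,
    Matrix.exp_diagonal, toC_rotation]
  congr
  ext i
  fin_cases i <;> simp [← Complex.exp_eq_exp_ℂ]

lemma isSO3_rho1 (θ : ℝ) : isSO3 (rho1 θ) := by
  refine ⟨by rw [rho1_transpose, ← rho1_add, add_neg_cancel, rho1_zero], ?_⟩
  rw [rho1_eq, det_fin_three]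
  simp [← sq, Real.cos_sq_add_sin_sq]

lemma inv_toC_rho1 (θ : ℝ) : (toC (rho1 θ))⁻¹ = toC (rho1 (-θ)) := by
  rw [(isSO3_rho1 θ).inv_toC, rho1_transpose]

lemma exp_smul_A0s_eq_conj {s : ℝ} (hs : s = 1 ∨ s = -1) (φ : ℝ) :
    exp (-(s : ℂ) * φ * I) • A0s s = toC (rho1 φ) * A0s s * toC (rho1 (-φ)) := by
  have hexp : exp (-(s : ℂ) * φ * I) = Real.cos φ - s * Real.sin φ * I := by
    rw [show -(s : ℂ) * φ * I = ((-s * φ : ℝ) : ℂ) * I by push_cast; ring, exp_mul_I,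
      ← ofReal_cos, ← ofReal_sin]
    rcases hs with rfl | rfl <;> simp [sub_eq_add_neg]
  rw [hexp, rho1_eq, rho1_eq]
  rcases hs with rfl | rfl <;>
  · ext i j
    fin_cases i <;> fin_cases j <;>
      simp [A0s, toC, mul_apply, Fin.sum_univ_three] <;> ring_nf <;> simp [I_sq]

lemma eq_smul_one_of_commute_A0s {s : ℝ} (hs : s ≠ 0) {R : M3R}
    (h : Commute (toC R) (A0s s)) : R = R 0 0 • 1 := by
  have entry (i j : Fin 3) := congrFun (congrFun h.eq i) j
  have h01 := entry 0 1
  have h02 := entry 0 2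
  have h10 := entry 1 0
  have h11 := entry 1 1
  have h12 := entry 1 2
  have h21 := entry 2 1
  simp [toC, A0s, mul_apply, Fin.sum_univ_three, Complex.ext_iff, hs] at h01 h02 h10 h11 h12 h21
  have h22 : R 2 2 = R 0 0 := mul_left_cancel₀ hs (by linarith [h02.2])
  ext i j
  fin_cases i <;> fin_cases j <;> simp <;> linarith

lemma eq_one_of_isSO3_of_conj_A0s {s : ℝ} (hs : s ≠ 0) {R : M3R} (hR : isSO3 R)
    (h : toC R * A0s s * (toC R)⁻¹ = A0s s) : R = 1 := by
  have hcomm : Commute (toC R) (A0s s) := by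
    calc toC R * A0s s = toC R * A0s s * ((toC R)⁻¹ * toC R) := by rw [hR.inv_mul_toC, mul_one]
      _ = A0s s * toC R := by rw [← mul_assoc, h]
  have hscalar := eq_smul_one_of_commute_A0s hs hcomm
  have hcube : R 0 0 ^ 3 = 1 := by
    simpa [hR.2] using (congrArg det hscalar).symm
  rw [hscalar, (Odd.pow_inj (by decide)).mp (hcube.trans (one_pow 3).symm), one_smul]

lemma eq_rho1_of_conj_A0s_eq_exp_smul {s : ℝ} (hs : s = 1 ∨ s = -1) {R : M3R} (hR : isSO3 R)
    {φ : ℝ} (h : toC R * A0s s * (toC R)⁻¹ = exp (-(s : ℂ) * φ * I) • A0s s) :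
    R = rho1 φ := by
  have hs0 : s ≠ 0 := by rcases hs with rfl | rfl <;> norm_num
  -- by (a), conjugating by `ρ(-φ)` cancels the phase
  have hfix : toC (rho1 (-φ) * R) * A0s s * (toC (rho1 (-φ) * R))⁻¹ = A0s s := by
    rw [toC_mul, Matrix.mul_inv_rev, inv_toC_rho1]
    calc toC (rho1 (-φ)) * toC R * A0s s * ((toC R)⁻¹ * toC (rho1 (- -φ)))
        = toC (rho1 (-φ)) * (toC R * A0s s * (toC R)⁻¹) * toC (rho1 (- -φ)) := by
          simp only [mul_assoc]
      _ = exp (-(s : ℂ) * φ * I) • exp (-(s : ℂ) * ↑(-φ) * I) • A0s s := by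
          rw [h, mul_smul_comm, smul_mul_assoc, exp_smul_A0s_eq_conj hs (-φ)]
      _ = A0s s := by
          rw [smul_smul, ← exp_add, ofReal_neg]
          simp
  calc R = rho1 φ * (rho1 (-φ) * R) := by
        rw [← mul_assoc, ← rho1_add, add_neg_cancel, rho1_zero, one_mul]
    _ = rho1 φ := by rw [eq_one_of_isSO3_of_conj_A0s hs0 ((isSO3_rho1 _).mul hR) hfix, mul_one]

lemma exp_arg_mul_I_of_norm_eq_one {z : ℂ} (hz : ‖z‖ = 1) : exp (arg z * I) = z := by
  simpa [hz] using norm_mul_exp_arg_mul_I z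

lemma mem_unitary_of_norm_eq_one {z : ℂ} (hz : ‖z‖ = 1) : z ∈ unitary ℂ := by
  have hconj : (starRingEnd ℂ) z * z = 1 := by
    rw [mul_comm, mul_conj, normSq_eq_norm_sq, hz]
    norm_num
  exact ⟨hconj, by rwa [mul_comm] at hconj⟩

lemma exp_mul_I_rho1_mem_StabS {s : ℝ} (hs : s = 1 ∨ s = -1) (φ : ℝ) :
    (exp (φ * I), rho1 (s * φ)) ∈ StabS s := by
  refine ⟨⟨norm_exp_ofReal_mul_I φ, isSO3_rho1 _⟩, ?_⟩
  have hphase : (φ : ℂ) * I + -(s : ℂ) * ↑(s * φ) * I = 0 := by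
    rcases hs with rfl | rfl <;> push_cast <;> ring
  change exp (φ * I) • (toC (rho1 (s * φ)) * A0s s * (toC (rho1 (s * φ)))⁻¹) = A0s s
  rw [inv_toC_rho1, ← exp_smul_A0s_eq_conj hs, smul_smul, ← exp_add, hphase, exp_zero, one_smul]

lemma eq_rho1_of_mem_StabS {s : ℝ} (hs : s = 1 ∨ s = -1) {g : ℂ × M3R} (hg : g ∈ StabS s) :
    g.2 = rho1 (s * arg g.1) := by
  obtain ⟨⟨hnorm, hR⟩, hfix⟩ := hg
  have hz0 : g.1 ≠ 0 := norm_ne_zero_iff.mp (by rw [hnorm]; exact one_ne_zero)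
  have hphase : -(s : ℂ) * ↑(s * arg g.1) * I = -(arg g.1 * I) := by
    rcases hs with rfl | rfl <;> push_cast <;> ring
  refine eq_rho1_of_conj_A0s_eq_exp_smul hs hR ?_
  rw [hphase, exp_neg, exp_arg_mul_I_of_norm_eq_one hnorm]
  nth_rewrite 2 [← hfix]
  rw [smul_smul, inv_mul_cancel₀ hz0, one_smul]

lemma StabS_eq_setOf_exp_rho1 {s : ℝ} (hs : s = 1 ∨ s = -1) :
    StabS s = {g : ℂ × M3R | ∃ φ : ℝ, g = (exp (φ * I), rho1 (s * φ))} := by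
  ext g
  refine ⟨fun hg => ⟨arg g.1, ?_⟩, ?_⟩
  · exact Prod.ext (exp_arg_mul_I_of_norm_eq_one hg.1.1).symm (eq_rho1_of_mem_StabS hs hg)
  · rintro ⟨φ, rfl⟩
    exact exp_mul_I_rho1_mem_StabS hs φ

def StabS.phase (s : ℝ) (g : StabS s) : unitary ℂ :=
  ⟨g.1.1, mem_unitary_of_norm_eq_one g.2.1.1⟩

lemma StabS.phase_bijective {s : ℝ} (hs : s = 1 ∨ s = -1) :
    Function.Bijective (StabS.phase s) := by
  refine ⟨fun a b hab => ?_, fun u => ?_⟩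
  · have hfst : a.1.1 = b.1.1 := congrArg Subtype.val hab
    refine Subtype.ext (Prod.ext hfst ?_)
    rw [eq_rho1_of_mem_StabS hs a.2, eq_rho1_of_mem_StabS hs b.2, hfst]
  · have hu : exp (arg (u : ℂ) * I) = u :=
      exp_arg_mul_I_of_norm_eq_one (CStarRing.norm_of_mem_unitary u.2)
    refine ⟨⟨(u, rho1 (s * arg (u : ℂ))), ?_⟩, rfl⟩
    simpa [hu] using exp_mul_I_rho1_mem_StabS hs (arg (u : ℂ))

/-- For each sign `s = ±1`: (a) `e^{∓iφ} A₀^± = ρ(φ) A₀^± ρ(-φ)`; (b) the stabilizer of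
`A₀^±` under conjugation by `SO(3)` is trivial; (c) the stabilizer of `A₀^±` in
`U(1) × SO(3)` is `{(e^{iφ}, exp(±φ ê₁))}`, a group isomorphic to `U(1)`. -/
theorem stabilizers_Omega8_phase (s : ℝ) (hs : s = 1 ∨ s = -1) :
    (∀ φ : ℝ, Complex.exp (-(s : ℂ) * (φ : ℂ) * Complex.I) • A0s s =
        toC (rho1 φ) * A0s s * toC (rho1 (-φ))) ∧
    (∀ R : M3R, isSO3 R → toC R * A0s s * (toC R)⁻¹ = A0s s → R = 1) ∧
    (StabS s = {g : ℂ × M3R | ∃ φ : ℝ,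
        g = (Complex.exp (φ * Complex.I), rho1 (s * φ))} ∧
      ∃ f : ↥(StabS s) → ↥(unitary ℂ),
        Function.Bijective f ∧
          ∀ a b c : ↥(StabS s), c.val = a.val * b.val → f c = f a * f b) := by
  have hs0 : s ≠ 0 := by rcases hs with rfl | rfl <;> norm_num
  refine ⟨exp_smul_A0s_eq_conj hs, fun R hR => eq_one_of_isSO3_of_conj_A0s hs0 hR,
    StabS_eq_setOf_exp_rho1 hs, StabS.phase s, StabS.phase_bijective hs,
    fun _ _ _ hc => Subtype.ext (congrArg Prod.fst hc)⟩
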